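/- Let Ω ⊆ ℝ^N be a bounded domain, K ∈ L^∞(Ω×Ω) symmetric nonnegative, a bounded continuous, and let λ₊ = sup over nonzero φ ∈ L²(Ω) of ⟨L_Ω φ + aφ, φ⟩ / ‖φ‖²_{L²}. If φ ∈ L²(Ω) attains λ₊, i.e. ⟨L_Ω φ + aφ, φ⟩ = λ₊ ‖φ‖², then its positive part φ⁺ also attains λ₊ (provided φ⁺ ≢ 0). In particular the maximizer can be taken nonnegative. -/

import Mathlib

open MeasureTheory Filter Metric Set
open scoped Topology

/-! The positive and negative parts `φ⁺`, `φ⁻` have disjoint supports, so `φ² = φ⁺² + φ⁻²` and the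
potential term and the norm split additively, while the kernel term of `φ = φ⁺ - φ⁻` is that of
`φ⁺` plus that of `φ⁻` minus the cross terms `∬ K φ⁺ φ⁻` and `∬ K φ⁻ φ⁺`, both nonnegative since
`K ≥ 0`. Hence `λ₊ ‖φ‖² = Q(φ) ≤ Q(φ⁺) + Q(φ⁻) ≤ λ₊ ‖φ⁺‖² + λ₊ ‖φ⁻‖² = λ₊ ‖φ‖²`, which forces
`Q(φ⁺) = λ₊ ‖φ⁺‖²`. The bound `Q(ψ) ≤ λ₊ ‖ψ‖²` also holds
when `ψ = 0` a.e., both sides being `0`. -/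

noncomputable section

/-- The quadratic form `Q(φ) = ⟨L_Ω φ + aφ, φ⟩ = ∬ K(x,y)φ(x)φ(y) + ∫ a φ²`. -/
def quadForm (N : ℕ) (Ω : Set (EuclideanSpace ℝ (Fin N)))
    (K : EuclideanSpace ℝ (Fin N) → EuclideanSpace ℝ (Fin N) → ℝ)
    (a : EuclideanSpace ℝ (Fin N) → ℝ)
    (φ : EuclideanSpace ℝ (Fin N) → ℝ) : ℝ :=
  (∫ x in Ω, ∫ y in Ω, K x y * φ x * φ y) + ∫ x in Ω, a x * (φ x) ^ 2

theorem sq_eq_max_sq_add_max_neg_sq (t : ℝ) : t ^ 2 = max t 0 ^ 2 + max (-t) 0 ^ 2 := by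
  rcases le_total 0 t with h | h
  · rw [max_eq_left h, max_eq_right (neg_nonpos.2 h)]; ring
  · rw [max_eq_right h, max_eq_left (neg_nonneg.2 h)]; ring

def kernelForm {α : Type*} [MeasurableSpace α] (μ : Measure α) (K : α → α → ℝ)
    (f g : α → ℝ) : ℝ :=
  ∫ x, ∫ y, K x y * f x * g y ∂μ ∂μ

section KernelForm

variable {α : Type*} [MeasurableSpace α] {μ : Measure α} {K : α → α → ℝ} {f g : α → ℝ}

theorem kernelForm_nonneg (hK : ∀ x y, 0 ≤ K x y) (hf : 0 ≤ f) (hg : 0 ≤ g) :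
    0 ≤ kernelForm μ K f g :=
  integral_nonneg fun x => integral_nonneg fun y => mul_nonneg (mul_nonneg (hK x y) (hf x)) (hg y)

variable {M : ℝ}

theorem integrable_kernel_mul_prod (hKm : AEStronglyMeasurable (Function.uncurry K) (μ.prod μ))
    (hKB : ∀ x y, |K x y| ≤ M) (hf : Integrable f μ) (hg : Integrable g μ) :
    Integrable (fun z : α × α => K z.1 z.2 * f z.1 * g z.2) (μ.prod μ) := by
  refine ((hf.abs.mul_prod hg.abs).const_mul M).mono' ((hKm.mul hf.1.comp_fst).mul hg.1.comp_snd) ?_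
  refine Eventually.of_forall fun z => ?_
  rw [Real.norm_eq_abs, abs_mul, abs_mul, mul_assoc]
  exact mul_le_mul_of_nonneg_right (hKB _ _) (by positivity)

variable [SFinite μ]

theorem kernelForm_eq_integral_prod (hKm : AEStronglyMeasurable (Function.uncurry K) (μ.prod μ))
    (hKB : ∀ x y, |K x y| ≤ M) (hf : Integrable f μ) (hg : Integrable g μ) :
    kernelForm μ K f g = ∫ z, K z.1 z.2 * f z.1 * g z.2 ∂μ.prod μ :=
  integral_integral (integrable_kernel_mul_prod hKm hKB hf hg)

theorem kernelForm_sub_sub (hKm : AEStronglyMeasurable (Function.uncurry K) (μ.prod μ))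
    (hKB : ∀ x y, |K x y| ≤ M) (hf : Integrable f μ) (hg : Integrable g μ) :
    kernelForm μ K (f - g) (f - g) =
      kernelForm μ K f f + kernelForm μ K g g - kernelForm μ K f g - kernelForm μ K g f := by
  have hint := fun {u v : α → ℝ} (hu : Integrable u μ) (hv : Integrable v μ) =>
    integrable_kernel_mul_prod hKm hKB hu hv
  have hexpand : (fun z : α × α => K z.1 z.2 * (f - g) z.1 * (f - g) z.2) = fun z =>
      K z.1 z.2 * f z.1 * f z.2 + K z.1 z.2 * g z.1 * g z.2 - K z.1 z.2 * f z.1 * g z.2 -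
        K z.1 z.2 * g z.1 * f z.2 := by
    ext z
    simp only [Pi.sub_apply]
    ring
  rw [kernelForm_eq_integral_prod hKm hKB (hf.sub hg) (hf.sub hg), hexpand,
    integral_sub (Integrable.sub' ((hint hf hf).fun_add (hint hg hg)) (hint hf hg)) (hint hg hf),
    integral_sub ((hint hf hf).fun_add (hint hg hg)) (hint hf hg),
    integral_add (hint hf hf) (hint hg hg),
    kernelForm_eq_integral_prod hKm hKB hf hf, kernelForm_eq_integral_prod hKm hKB hg hg,
    kernelForm_eq_integral_prod hKm hKB hf hg, kernelForm_eq_integral_prod hKm hKB hg hf]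

end KernelForm

variable {N : ℕ} {Ω : Set (EuclideanSpace ℝ (Fin N))}
  {K : EuclideanSpace ℝ (Fin N) → EuclideanSpace ℝ (Fin N) → ℝ}
  {a φ : EuclideanSpace ℝ (Fin N) → ℝ}

theorem quadForm_eq_kernelForm_add :
    quadForm N Ω K a φ = kernelForm (volume.restrict Ω) K φ φ + ∫ x in Ω, a x * φ x ^ 2 :=
  rfl

theorem quadForm_eq_zero_of_ae_eq_zero (hφ : φ =ᵐ[volume.restrict Ω] 0) :
    quadForm N Ω K a φ = 0 := by
  rw [quadForm, integral_eq_zero_of_ae (by filter_upwards [hφ] with x hx; simp [hx]),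
    integral_eq_zero_of_ae (by filter_upwards [hφ] with x hx; simp [hx]), add_zero]

theorem quadForm_le_mul_integral_sq {lplus : ℝ}
    (hsup : ∀ ψ : EuclideanSpace ℝ (Fin N) → ℝ, MemLp ψ 2 (volume.restrict Ω) →
      (∫ x in Ω, (ψ x) ^ 2) ≠ 0 → quadForm N Ω K a ψ ≤ lplus * ∫ x in Ω, (ψ x) ^ 2)
    (hφ : MemLp φ 2 (volume.restrict Ω)) :
    quadForm N Ω K a φ ≤ lplus * ∫ x in Ω, (φ x) ^ 2 := by
  by_cases h0 : (∫ x in Ω, (φ x) ^ 2) = 0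
  · have hφ0 : φ =ᵐ[volume.restrict Ω] 0 := by
      filter_upwards [(integral_eq_zero_iff_of_nonneg (fun x => sq_nonneg (φ x))
        hφ.integrable_sq).1 h0] with x hx
      exact pow_eq_zero_iff two_ne_zero |>.mp hx
    rw [quadForm_eq_zero_of_ae_eq_zero hφ0, h0, mul_zero]
  · exact hsup φ hφ h0

theorem quadForm_le_posPart_add_negPart [IsFiniteMeasure (volume.restrict Ω)] {M Ma : ℝ}
    (hK0 : ∀ x y, 0 ≤ K x y)
    (hKm : AEStronglyMeasurable (Function.uncurry K)
      ((volume.restrict Ω).prod (volume.restrict Ω)))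
    (hKB : ∀ x y, |K x y| ≤ M) (ha : AEStronglyMeasurable a (volume.restrict Ω))
    (haB : ∀ᵐ x ∂volume.restrict Ω, |a x| ≤ Ma) (hφ : MemLp φ 2 (volume.restrict Ω)) :
    quadForm N Ω K a φ ≤
      quadForm N Ω K a (fun x => max (φ x) 0) + quadForm N Ω K a (fun x => max (-φ x) 0) := by
  set p : EuclideanSpace ℝ (Fin N) → ℝ := fun x => max (φ x) 0
  set m : EuclideanSpace ℝ (Fin N) → ℝ := fun x => max (-φ x) 0
  have hp : MemLp p 2 (volume.restrict Ω) := hφ.pos_part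
  have hm : MemLp m 2 (volume.restrict Ω) := hφ.neg_part
  have hφpm : φ = p - m := funext fun x => (max_zero_sub_max_neg_zero_eq_self (φ x)).symm
  have hkernel : kernelForm (volume.restrict Ω) K φ φ =
      kernelForm (volume.restrict Ω) K p p + kernelForm (volume.restrict Ω) K m m -
        kernelForm (volume.restrict Ω) K p m - kernelForm (volume.restrict Ω) K m p := by
    rw [hφpm]
    exact kernelForm_sub_sub hKm hKB (hp.integrable one_le_two) (hm.integrable one_le_two)
  have hpotential :
      (∫ x in Ω, a x * φ x ^ 2) = (∫ x in Ω, a x * p x ^ 2) + ∫ x in Ω, a x * m x ^ 2 := by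
    rw [← integral_add (hp.integrable_sq.bdd_mul ha (by simpa using haB))
      (hm.integrable_sq.bdd_mul ha (by simpa using haB))]
    congr 1 with x
    rw [sq_eq_max_sq_add_max_neg_sq (φ x), mul_add]
  have hpm := kernelForm_nonneg (μ := volume.restrict Ω) hK0 (fun x => le_max_right (φ x) 0)
    (fun x => le_max_right (-φ x) 0)
  have hmp := kernelForm_nonneg (μ := volume.restrict Ω) hK0 (fun x => le_max_right (-φ x) 0)
    (fun x => le_max_right (φ x) 0)
  rw [quadForm_eq_kernelForm_add, quadForm_eq_kernelForm_add, quadForm_eq_kernelForm_add]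
  linarith

theorem stmt6_general (N : ℕ)
    (Ω : Set (EuclideanSpace ℝ (Fin N)))
    (K : EuclideanSpace ℝ (Fin N) → EuclideanSpace ℝ (Fin N) → ℝ)
    (a : EuclideanSpace ℝ (Fin N) → ℝ)
    (hΩo : IsOpen Ω)
    (hΩb : Bornology.IsBounded Ω)
    (hK0 : ∀ x y, 0 ≤ K x y)
    (hKmeas : Measurable (fun p : EuclideanSpace ℝ (Fin N) × EuclideanSpace ℝ (Fin N) => K p.1 p.2))
    (hKB : ∃ M, ∀ x y, K x y ≤ M)
    (hac : ContinuousOn a Ω) (haB : ∃ M, ∀ x ∈ Ω, |a x| ≤ M)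
    (lplus : ℝ)
    (hsup : ∀ ψ : EuclideanSpace ℝ (Fin N) → ℝ, MemLp ψ 2 (volume.restrict Ω) →
      (∫ x in Ω, (ψ x) ^ 2) ≠ 0 →
      quadForm N Ω K a ψ ≤ lplus * ∫ x in Ω, (ψ x) ^ 2)
    (φ : EuclideanSpace ℝ (Fin N) → ℝ)
    (hφ : MemLp φ 2 (volume.restrict Ω))
    (heq : quadForm N Ω K a φ = lplus * ∫ x in Ω, (φ x) ^ 2) :
    quadForm N Ω K a (fun x => max (φ x) 0) =
      lplus * ∫ x in Ω, (max (φ x) 0) ^ 2 := by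
  obtain ⟨M, hM⟩ := hKB
  obtain ⟨Ma, hMa⟩ := haB
  have : IsFiniteMeasure (volume.restrict Ω) := isFiniteMeasure_restrict.2 hΩb.measure_lt_top.ne
  have hsplit := quadForm_le_posPart_add_negPart hK0 hKmeas.aestronglyMeasurable
    (fun x y => (abs_of_nonneg (hK0 x y)).trans_le (hM x y))
    (hac.aestronglyMeasurable hΩo.measurableSet)
    (ae_restrict_of_forall_mem hΩo.measurableSet hMa) hφ
  have hnorm : (∫ x in Ω, φ x ^ 2) = (∫ x in Ω, max (φ x) 0 ^ 2) + ∫ x in Ω, max (-φ x) 0 ^ 2 := by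
    rw [← integral_add hφ.pos_part.integrable_sq hφ.neg_part.integrable_sq]
    simp only [← sq_eq_max_sq_add_max_neg_sq]
  rw [hnorm, mul_add] at heq
  refine le_antisymm (quadForm_le_mul_integral_sq hsup hφ.pos_part) ?_
  linarith [quadForm_le_mul_integral_sq hsup hφ.neg_part]

/-- If a maximizer `φ` of the Rayleigh quotient `Q(φ)/‖φ‖²` exists, then its
positive part `φ⁺ = max(φ, 0)` is also a maximizer (provided `φ⁺ ≢ 0`). -/
theorem stmt6 (N : ℕ)
    (Ω : Set (EuclideanSpace ℝ (Fin N)))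
    (K : EuclideanSpace ℝ (Fin N) → EuclideanSpace ℝ (Fin N) → ℝ)
    (a : EuclideanSpace ℝ (Fin N) → ℝ)
    (hΩo : IsOpen Ω) (hΩc : IsConnected Ω) (hΩne : Ω.Nonempty)
    (hΩb : Bornology.IsBounded Ω)
    (hK0 : ∀ x y, 0 ≤ K x y)
    (hKsym : ∀ x y, K x y = K y x)
    (hKmeas : Measurable (fun p : EuclideanSpace ℝ (Fin N) × EuclideanSpace ℝ (Fin N) => K p.1 p.2))
    (hKB : ∃ M, ∀ x y, K x y ≤ M)
    (hac : ContinuousOn a Ω) (haB : ∃ M, ∀ x ∈ Ω, |a x| ≤ M)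
    (lplus : ℝ)
    (hsup : ∀ ψ : EuclideanSpace ℝ (Fin N) → ℝ, MemLp ψ 2 (volume.restrict Ω) →
      (∫ x in Ω, (ψ x) ^ 2) ≠ 0 →
      quadForm N Ω K a ψ ≤ lplus * ∫ x in Ω, (ψ x) ^ 2)
    (φ : EuclideanSpace ℝ (Fin N) → ℝ)
    (hφ : MemLp φ 2 (volume.restrict Ω))
    (heq : quadForm N Ω K a φ = lplus * ∫ x in Ω, (φ x) ^ 2)
    (hplus : (∫ x in Ω, (max (φ x) 0) ^ 2) ≠ 0) :
    quadForm N Ω K a (fun x => max (φ x) 0) =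
      lplus * ∫ x in Ω, (max (φ x) 0) ^ 2 :=
  stmt6_general N Ω K a hΩo hΩb hK0 hKmeas hKB hac haB lplus hsup φ hφ heq
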